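/- (Gluing lemma: failure of uniform bounds yields a single unbounded weight) Suppose that for every integer k ≥ 1 there exist a matrix weight W_k on I₀ and a nonzero f_k ∈ L²_{W_k}(ℝ^d), supported on I₀, such that ‖M^c_{W_k} f_k‖²_{L²} > 4^k ‖f_k‖²_{L²_{W_k}}. Then there exist a matrix weight W̃ on I₀ and a function f̃ ∈ L²_{W̃}(ℝ^d) with ‖f̃‖_{L²_{W̃}} = 1 such that ‖M^c_{W̃} f̃‖_{L²} = ∞. -/

import Mathlib

open MeasureTheory Set
open scoped ENNReal Matrix Pointwise Classical

noncomputable section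

/-- The unit interval `I₀ = [0,1)`. -/
def I0 : Set ℝ := Set.Ico (0 : ℝ) 1

/-- The dyadic interval `[k/2^n, (k+1)/2^n)`. -/
def dyad (n k : ℕ) : Set ℝ := Set.Ico ((k : ℝ) / 2 ^ n) (((k : ℝ) + 1) / 2 ^ n)

/-- Real `d × d` matrices. -/
abbrev Mat (d : ℕ) := Matrix (Fin d) (Fin d) ℝ

/-- The Euclidean norm `|v|_{ℝ^d}`. -/
def enorm2 {d : ℕ} (v : Fin d → ℝ) : ℝ := Real.sqrt (∑ i, v i ^ 2)

/-- The Euclidean inner product `⟨v, w⟩_{ℝ^d}`. -/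
def dotp {d : ℕ} (v w : Fin d → ℝ) : ℝ := ∑ i, v i * w i

open scoped Classical in
/-- The positive semidefinite square root of a positive semidefinite matrix
(junk value `0` if the matrix is not positive semidefinite). -/
def matSqrt {d : ℕ} (A : Mat d) : Mat d := if h : A.PosSemidef then
  h.1.eigenvectorUnitary.1 * Matrix.diagonal ((↑) ∘ (Real.sqrt ·) ∘ h.1.eigenvalues) *
    (star h.1.eigenvectorUnitary : Mat d) else 0

/-- Order in the sense of quadratic forms: `A ⩽ B` iff `B - A` is positive semidefinite. -/
def matLE {d : ℕ} (A B : Mat d) : Prop := (B - A).PosSemidef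

/-- The average `⟨g⟩_I = |I|⁻¹ ∫_I g` of a (scalar- or vector-valued) function. -/
def avgOn {E : Type*} [NormedAddCommGroup E] [NormedSpace ℝ E] (I : Set ℝ) (g : ℝ → E) : E :=
  (volume I).toReal⁻¹ • ∫ x in I, g x

/-- The entrywise average `⟨W⟩_I` of a matrix-valued function. -/
def avgMat {d : ℕ} (I : Set ℝ) (W : ℝ → Mat d) : Mat d :=
  Matrix.of fun i j => avgOn I fun x => W x i j

/-- A matrix weight on `I₀`: an integrable function with symmetric values,
positive definite a.e. on `I₀`. -/
structure IsMatrixWeight (d : ℕ) (W : ℝ → Mat d) : Prop where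
  intOn : ∀ i j, IntegrableOn (fun x => W x i j) I0
  symm : ∀ x, (W x).IsSymm
  posdef : ∀ᵐ x ∂(volume.restrict I0), (W x).PosDef

/-- Membership in `L²_W(ℝ^d)`. -/
def MemL2W {d : ℕ} (W : ℝ → Mat d) (f : ℝ → Fin d → ℝ) : Prop :=
  Measurable f ∧ IntegrableOn (fun x => dotp (W x *ᵥ f x) (f x)) I0

/-- The squared norm `‖f‖²_{L²_W} = ∫_{I₀} ⟨W(x) f(x), f(x)⟩ dx`. -/
def l2normSq {d : ℕ} (W : ℝ → Mat d) (f : ℝ → Fin d → ℝ) : ℝ :=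
  ∫ x in I0, dotp (W x *ᵥ f x) (f x)

/-- The average `⟨φ W f⟩_I = |I|⁻¹ ∫_I φ(y) W(y) f(y) dy`. -/
def avgPhiWf {d : ℕ} (I : Set ℝ) (φ : ℝ → ℝ) (W : ℝ → Mat d) (f : ℝ → Fin d → ℝ) :
    Fin d → ℝ :=
  avgOn I fun y => φ y • (W y *ᵥ f y)

/-- Admissible functions `φ : I → [-1,1]`, measurable. -/
def Adm (I : Set ℝ) (φ : ℝ → ℝ) : Prop :=
  Measurable φ ∧ ∀ y ∈ I, φ y ∈ Set.Icc (-1 : ℝ) 1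

/-- The matrix-weighted dyadic convex body maximal function `M^c_W f`,
valued in `ℝ≥0∞`. -/
def McW {d : ℕ} (W : ℝ → Mat d) (f : ℝ → Fin d → ℝ) (x : ℝ) : ℝ≥0∞ :=
  ⨆ (n : ℕ) (k : ℕ) (_ : k < 2 ^ n ∧ x ∈ dyad n k) (φ : ℝ → ℝ) (_ : Adm (dyad n k) φ),
    ENNReal.ofReal
      (enorm2 (matSqrt (W x) *ᵥ ((avgMat (dyad n k) W)⁻¹ *ᵥ avgPhiWf (dyad n k) φ W f)))

/-!
The counterexamples are placed side by side. The `k`-th pair `(W_k, f_k)` is transplanted by the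
affine map `y ↦ 2^{e_k} y - 1` onto the dyadic interval `[2^{-e_k}, 2^{1-e_k})`, scaled by `a_k`,
and the glued weight is the identity off these blocks. Every dyadic subinterval of `I₀` pulls back
to a dyadic subinterval of the `k`-th block, so on that block the glued maximal function dominates
`a_k M^c_{W_k} f_k` composed with the affine map. Taking `e_k` large keeps the glued weight
integrable; taking `a_k` so that block `k` carries `2^{-(k+1)}` of `‖f̃‖²` makes it contribute at
least `2^{k+1}` to `‖M^c_{W̃} f̃‖²`.
-/

open Function

section Dilation

def dilate (e : ℕ) (y : ℝ) : ℝ := 2 ^ e * y - 1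

variable (e : ℕ)

lemma measurable_dilate : Measurable (dilate e) := by
  unfold dilate; fun_prop

lemma measurableEmbedding_dilate : MeasurableEmbedding (dilate e) :=
  (Homeomorph.subRight (1 : ℝ)).measurableEmbedding.comp
    (Homeomorph.mulLeft₀ ((2 : ℝ) ^ e) (by positivity)).measurableEmbedding

lemma map_dilate_volume : volume.map (dilate e) = ENNReal.ofReal (2 ^ e)⁻¹ • volume := by
  have h : dilate e = (· + (-1 : ℝ)) ∘ ((2 : ℝ) ^ e * ·) := by
    funext y; simp [dilate, sub_eq_add_neg]
  rw [h, ← Measure.map_map (by fun_prop) (by fun_prop), Real.map_volume_mul_left (by positivity),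
    Measure.map_smul, map_add_right_eq_self, abs_of_pos (by positivity)]

lemma map_dilate_restrict_preimage {s : Set ℝ} (hs : MeasurableSet s) :
    (volume.restrict (dilate e ⁻¹' s)).map (dilate e) =
      ENNReal.ofReal (2 ^ e)⁻¹ • volume.restrict s := by
  rw [← Measure.restrict_map (measurable_dilate e) hs, map_dilate_volume, Measure.restrict_smul]

lemma volume_preimage_dilate (s : Set ℝ) :
    volume (dilate e ⁻¹' s) = ENNReal.ofReal (2 ^ e)⁻¹ * volume s := by
  rw [← (measurableEmbedding_dilate e).map_apply, map_dilate_volume, Measure.smul_apply,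
    smul_eq_mul]

variable {e} {s : Set ℝ}

lemma setLIntegral_preimage_dilate (hs : MeasurableSet s) (g : ℝ → ℝ≥0∞) :
    ∫⁻ y in dilate e ⁻¹' s, g (dilate e y) = ENNReal.ofReal (2 ^ e)⁻¹ * ∫⁻ x in s, g x := by
  rw [← (measurableEmbedding_dilate e).lintegral_map, map_dilate_restrict_preimage e hs,
    lintegral_smul_measure, smul_eq_mul]

lemma setIntegral_preimage_dilate {E : Type*} [NormedAddCommGroup E] [NormedSpace ℝ E]
    (hs : MeasurableSet s) (g : ℝ → E) :
    ∫ y in dilate e ⁻¹' s, g (dilate e y) = ((2 : ℝ) ^ e)⁻¹ • ∫ x in s, g x := by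
  rw [← (measurableEmbedding_dilate e).integral_map, map_dilate_restrict_preimage e hs,
    integral_smul_measure, ENNReal.toReal_ofReal (by positivity)]

lemma MeasureTheory.IntegrableOn.comp_dilate {E : Type*} [NormedAddCommGroup E] {g : ℝ → E}
    (hs : MeasurableSet s) (hg : IntegrableOn g s) :
    IntegrableOn (fun y => g (dilate e y)) (dilate e ⁻¹' s) := by
  refine (measurableEmbedding_dilate e).integrable_map_iff.1 ?_
  rw [map_dilate_restrict_preimage e hs]
  exact hg.smul_measure ENNReal.ofReal_ne_top

lemma ae_restrict_preimage_dilate (hs : MeasurableSet s) {p : ℝ → Prop}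
    (hp : ∀ᵐ x ∂volume.restrict s, p x) :
    ∀ᵐ y ∂volume.restrict (dilate e ⁻¹' s), p (dilate e y) := by
  rw [← (measurableEmbedding_dilate e).ae_map_iff, map_dilate_restrict_preimage e hs]
  exact Measure.ae_smul_measure hp _

lemma avgOn_preimage_dilate {E : Type*} [NormedAddCommGroup E] [NormedSpace ℝ E]
    (hs : MeasurableSet s) (g : ℝ → E) :
    avgOn (dilate e ⁻¹' s) (fun y => g (dilate e y)) = avgOn s g := by
  rw [avgOn, avgOn, setIntegral_preimage_dilate hs, volume_preimage_dilate, ENNReal.toReal_mul,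
    ENNReal.toReal_ofReal (by positivity), smul_smul, mul_inv, inv_inv]
  congr 1
  field_simp

lemma preimage_dilate_dyad (e n j : ℕ) :
    dilate e ⁻¹' dyad n j = dyad (n + e) (j + 2 ^ n) := by
  ext y
  have h1 : (0 : ℝ) < 2 ^ n := by positivity
  have h2 : (0 : ℝ) < 2 ^ (n + e) := by positivity
  simp only [dilate, dyad, mem_preimage, mem_Ico]
  rw [div_le_iff₀ h1, lt_div_iff₀ h1, div_le_iff₀ h2, lt_div_iff₀ h2, pow_add]
  push_cast
  constructor <;> rintro ⟨h3, h4⟩ <;> constructor <;> nlinarith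

lemma preimage_dilate_I0 (e : ℕ) : dilate e ⁻¹' I0 = dyad e 1 := by
  have : I0 = dyad 0 0 := by simp [dyad, I0]
  rw [this, preimage_dilate_dyad]
  norm_num

end Dilation

section Dyadic

lemma measurableSet_dyad (n j : ℕ) : MeasurableSet (dyad n j) := measurableSet_Ico

lemma measurableSet_I0 : MeasurableSet I0 := measurableSet_Ico

lemma volume_I0_ne_top : volume I0 ≠ ⊤ := by simp [I0]

lemma dyad_subset_I0 {n j : ℕ} (hj : j < 2 ^ n) : dyad n j ⊆ I0 := by
  rintro y ⟨h1, h2⟩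
  have hj' : (j : ℝ) + 1 ≤ 2 ^ n := by exact_mod_cast hj
  exact ⟨(by positivity : (0 : ℝ) ≤ j / 2 ^ n).trans h1,
    h2.trans_le ((div_le_one (by positivity)).2 hj')⟩

lemma dyad_one_subset_I0 {e : ℕ} (he : 1 ≤ e) : dyad e 1 ⊆ I0 :=
  dyad_subset_I0 (Nat.one_lt_two_pow (by omega))

lemma disjoint_dyad_one {m n : ℕ} (h : m ≠ n) : Disjoint (dyad m 1) (dyad n 1) := by
  wlog hmn : m < n generalizing m n
  · exact (this h.symm (by omega)).symm
  have hpow : (2 : ℝ) * 2 ^ m ≤ 2 ^ n := by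
    rw [← pow_succ']; exact pow_le_pow_right₀ one_le_two hmn
  have hsep : (1 + 1 : ℝ) / 2 ^ n ≤ 1 / 2 ^ m := by
    rw [div_le_div_iff₀ (by positivity) (by positivity)]; linarith
  refine Set.disjoint_left.2 fun y hym hyn => ?_
  simp only [dyad, Nat.cast_one, mem_Ico] at hym hyn
  linarith [hym.1, hyn.2]

end Dyadic

lemma avgOn_congr {E : Type*} [NormedAddCommGroup E] [NormedSpace ℝ E] {I : Set ℝ}
    (hI : MeasurableSet I) {g g' : ℝ → E} (h : EqOn g g' I) : avgOn I g = avgOn I g' := by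
  rw [avgOn, avgOn, setIntegral_congr_fun hI h]

lemma avgOn_smul {E : Type*} [NormedAddCommGroup E] [NormedSpace ℝ E] (I : Set ℝ) (c : ℝ)
    (g : ℝ → E) : avgOn I (fun x => c • g x) = c • avgOn I g := by
  rw [avgOn, avgOn, integral_smul, smul_comm]

lemma enorm2_smul {d : ℕ} {c : ℝ} (hc : 0 ≤ c) (v : Fin d → ℝ) :
    enorm2 (c • v) = c * enorm2 v := by
  have h : ∑ i, (c • v) i ^ 2 = c ^ 2 * ∑ i, v i ^ 2 := by
    simp only [Pi.smul_apply, smul_eq_mul, mul_pow, Finset.mul_sum]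
  rw [enorm2, enorm2, h, Real.sqrt_mul (by positivity), Real.sqrt_sq hc]

lemma le_McW {d : ℕ} (W : ℝ → Mat d) (f : ℝ → Fin d → ℝ) {x : ℝ} {n j : ℕ} (hj : j < 2 ^ n)
    (hx : x ∈ dyad n j) {φ : ℝ → ℝ} (hφ : Adm (dyad n j) φ) :
    ENNReal.ofReal
      (enorm2 (matSqrt (W x) *ᵥ ((avgMat (dyad n j) W)⁻¹ *ᵥ avgPhiWf (dyad n j) φ W f)))
      ≤ McW W f x :=
  le_iSup₂_of_le n j (le_iSup₂_of_le ⟨hj, hx⟩ φ (le_iSup_of_le hφ le_rfl))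

section Rescaling

variable {d : ℕ} {W Wt : ℝ → Mat d} {f ft : ℝ → Fin d → ℝ} {e : ℕ} {a : ℝ} {I : Set ℝ}

lemma avgMat_preimage_dilate (hI : MeasurableSet I)
    (hW : EqOn Wt (W ∘ dilate e) (dilate e ⁻¹' I)) :
    avgMat (dilate e ⁻¹' I) Wt = avgMat I W := by
  ext i j
  simp only [avgMat, Matrix.of_apply]
  rw [avgOn_congr (hI.preimage (measurable_dilate e)) (g' := fun y => W (dilate e y) i j)
    fun y hy => by rw [hW hy, comp_apply]]
  exact avgOn_preimage_dilate hI fun x => W x i j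

lemma avgPhiWf_preimage_dilate (hI : MeasurableSet I)
    (hW : EqOn Wt (W ∘ dilate e) (dilate e ⁻¹' I))
    (hf : EqOn ft (fun y => a • f (dilate e y)) (dilate e ⁻¹' I)) (φ : ℝ → ℝ) :
    avgPhiWf (dilate e ⁻¹' I) (φ ∘ dilate e) Wt ft = a • avgPhiWf I φ W f := by
  rw [avgPhiWf, avgOn_congr (hI.preimage (measurable_dilate e))
    (g' := fun y => a • (φ (dilate e y) • (W (dilate e y) *ᵥ f (dilate e y)))), avgOn_smul,
    avgOn_preimage_dilate hI fun x => φ x • (W x *ᵥ f x), avgPhiWf]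
  intro y hy
  simp only [comp_apply, hW hy, hf hy, Matrix.mulVec_smul, smul_comm a]

lemma ofReal_mul_McW_dilate_le (he : 1 ≤ e) (ha : 0 ≤ a)
    (hW : EqOn Wt (W ∘ dilate e) (dyad e 1))
    (hf : EqOn ft (fun y => a • f (dilate e y)) (dyad e 1)) {y : ℝ} (hy : y ∈ dyad e 1) :
    ENNReal.ofReal a * McW W f (dilate e y) ≤ McW Wt ft y := by
  simp only [McW, ENNReal.mul_iSup]
  refine iSup_le fun n => iSup_le fun j => iSup_le fun ⟨hj, hyj⟩ => iSup_le fun φ =>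
    iSup_le fun hφ => ?_
  have hI := measurableSet_dyad n j
  have hsub : dilate e ⁻¹' dyad n j ⊆ dyad e 1 :=
    preimage_dilate_I0 e ▸ preimage_mono (dyad_subset_I0 hj)
  have hφ' : Adm (dilate e ⁻¹' dyad n j) (φ ∘ dilate e) :=
    ⟨hφ.1.comp (measurable_dilate e), fun z hz => hφ.2 _ hz⟩
  have hj' : j + 2 ^ n < 2 ^ (n + e) :=
    calc j + 2 ^ n < 2 ^ (n + 1) := by rw [pow_succ]; omega
      _ ≤ 2 ^ (n + e) := Nat.pow_le_pow_right two_pos (by omega)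
  rw [← ENNReal.ofReal_mul ha, ← enorm2_smul ha, ← Matrix.mulVec_smul, ← Matrix.mulVec_smul,
    ← avgPhiWf_preimage_dilate hI (hW.mono hsub) (hf.mono hsub),
    ← avgMat_preimage_dilate hI (hW.mono hsub), show W (dilate e y) = Wt y from (hW hy).symm]
  rw [preimage_dilate_dyad] at hφ' ⊢
  exact le_McW Wt ft hj' (preimage_dilate_dyad e n j ▸ hyj) hφ'

end Rescaling

section Glue

variable {α β : Type*} {J : ℕ → Set α} {g : ℕ → α → β} {b : β} {x : α}

def glue (J : ℕ → Set α) (g : ℕ → α → β) (b : β) (x : α) : β :=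
  if h : ∃ k, x ∈ J k then g (Nat.find h) x else b

lemma glue_of_mem (hJ : Pairwise (Disjoint on J)) {k : ℕ} (hx : x ∈ J k) :
    glue J g b x = g k x := by
  have h : ∃ k, x ∈ J k := ⟨k, hx⟩
  have hk : Nat.find h = k := by
    by_contra hne
    exact Set.disjoint_left.1 (hJ hne) (Nat.find_spec h) hx
  rw [glue, dif_pos h, hk]

lemma glue_of_notMem (hx : x ∉ ⋃ k, J k) : glue J g b x = b :=
  dif_neg (by simpa using hx)

lemma glue_mem {S : Set β} (hg : ∀ k x, g k x ∈ S) (hb : b ∈ S) : glue J g b x ∈ S := by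
  unfold glue; split_ifs <;> simp_all

lemma measurable_glue [MeasurableSpace α] [MeasurableSpace β] (hJ : ∀ k, MeasurableSet (J k))
    (hg : ∀ k, Measurable (g k)) : Measurable (glue J g b) := by
  have hcover : ∀ x, ∃ n, x ∈ J n ∨ x ∉ ⋃ k, J k := fun x => by
    by_cases hx : x ∈ ⋃ k, J k
    · obtain ⟨n, hn⟩ := mem_iUnion.1 hx; exact ⟨n, Or.inl hn⟩
    · exact ⟨0, Or.inr hx⟩
  have heq : glue J g b =
      fun x => (fun n x => if x ∈ J n then g n x else b) (Nat.find (hcover x)) x := by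
    funext x
    by_cases hx : ∃ k, x ∈ J k
    · have : Nat.find (hcover x) = Nat.find hx :=
        Nat.find_congr' fun {n} => or_iff_left (not_not.2 (mem_iUnion.2 hx))
      simp only [glue, dif_pos hx, this, if_pos (Nat.find_spec hx)]
    · push Not at hx
      simp only [glue, dif_neg (not_exists.2 hx), if_neg (hx _)]
  rw [heq]
  exact Measurable.find (f := fun n x => if x ∈ J n then g n x else b)
    (p := fun n x => x ∈ J n ∨ x ∉ ⋃ k, J k)
    (fun n => (hg n).ite (hJ n) measurable_const)
    (fun n => (hJ n).union (MeasurableSet.iUnion hJ).compl) hcover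

end Glue

section Blocks

variable {α E : Type*} [MeasurableSpace α] [NormedAddCommGroup E] {μ : Measure α} {s : Set α}
  {J : ℕ → Set α}

lemma integrableOn_of_blocks (hs : MeasurableSet s) (hμs : μ s ≠ ⊤)
    (hJ : ∀ k, MeasurableSet (J k)) (hJs : ∀ k, J k ⊆ s) {g : α → E} {c : E}
    (hc : ∀ x ∈ s \ ⋃ k, J k, g x = c) (hint : ∀ k, IntegrableOn g (J k) μ)
    (hsum : Summable fun k => ∫ x in J k, ‖g x‖ ∂μ) : IntegrableOn g s μ := by
  rw [← sdiff_union_of_subset (iUnion_subset hJs)]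
  refine IntegrableOn.union ?_ (integrableOn_iUnion_of_summable_integral_norm hint hsum)
  exact (integrableOn_const (ne_top_of_le_ne_top hμs (measure_mono sdiff_subset))).congr_fun
    (fun x hx => (hc x hx).symm) (hs.diff (MeasurableSet.iUnion hJ))

lemma setIntegral_eq_tsum_of_blocks [NormedSpace ℝ E] (hs : MeasurableSet s)
    (hJ : ∀ k, MeasurableSet (J k)) (hd : Pairwise (Disjoint on J)) (hJs : ∀ k, J k ⊆ s)
    {g : α → E} (h0 : ∀ x ∈ s \ ⋃ k, J k, g x = 0) (hg : IntegrableOn g s μ) :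
    ∫ x in s, g x ∂μ = ∑' k, ∫ x in J k, g x ∂μ := by
  rw [setIntegral_eq_of_subset_of_forall_sdiff_eq_zero hs (iUnion_subset hJs) h0,
    integral_iUnion hJ hd (hg.mono_set (iUnion_subset hJs))]

lemma ae_restrict_of_blocks (hs : MeasurableSet s) (hJ : ∀ k, MeasurableSet (J k))
    {p : α → Prop} (hc : ∀ x ∈ s \ ⋃ k, J k, p x) (hp : ∀ k, ∀ᵐ x ∂μ.restrict (J k), p x) :
    ∀ᵐ x ∂μ.restrict s, p x := by
  refine ae_restrict_of_ae_restrict_of_subset (t := (s \ ⋃ k, J k) ∪ ⋃ k, J k)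
    (subset_sdiff_union s _) ?_
  rw [ae_restrict_union_iff, ae_restrict_iUnion_iff]
  exact ⟨ae_restrict_of_forall_mem (hs.diff (MeasurableSet.iUnion hJ)) hc, hp⟩

end Blocks

section Gluing

variable {d : ℕ}

def pointwiseNormSq (W : ℝ → Mat d) (f : ℝ → Fin d → ℝ) (x : ℝ) : ℝ := dotp (W x *ᵥ f x) (f x)

lemma pointwiseNormSq_nonneg {W : ℝ → Mat d} (f : ℝ → Fin d → ℝ) {x : ℝ}
    (hW : (W x).PosSemidef) : 0 ≤ pointwiseNormSq W f x := by
  have := hW.dotProduct_mulVec_nonneg (f x)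
  rwa [star_trivial, dotProduct_comm] at this

lemma integral_norm_pointwiseNormSq {W : ℝ → Mat d} (hW : IsMatrixWeight d W)
    (f : ℝ → Fin d → ℝ) : ∫ x in I0, ‖pointwiseNormSq W f x‖ = l2normSq W f := by
  refine integral_congr_ae ?_
  filter_upwards [hW.posdef] with x hx
  exact Real.norm_of_nonneg (pointwiseNormSq_nonneg f hx.posSemidef)

variable {e : ℕ}

lemma integrableOn_dyad_one_of_eqOn {G g : ℝ → ℝ} {c : ℝ}
    (h : EqOn G (fun y => c * g (dilate e y)) (dyad e 1)) (hg : IntegrableOn g I0) :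
    IntegrableOn G (dyad e 1) := by
  refine IntegrableOn.congr_fun ?_ h.symm (measurableSet_dyad e 1)
  rw [← preimage_dilate_I0]
  exact (hg.comp_dilate measurableSet_I0).const_mul c

lemma setIntegral_dyad_one_of_eqOn {G g : ℝ → ℝ} {c : ℝ}
    (h : EqOn G (fun y => c * g (dilate e y)) (dyad e 1)) :
    ∫ y in dyad e 1, G y = c * (∫ x in I0, g x) / 2 ^ e := by
  rw [setIntegral_congr_fun (measurableSet_dyad e 1) h, integral_const_mul, ← preimage_dilate_I0,
    setIntegral_preimage_dilate measurableSet_I0, smul_eq_mul]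
  ring

variable {e : ℕ → ℕ} {W : ℕ → ℝ → Mat d} {f : ℕ → ℝ → Fin d → ℝ} {a : ℕ → ℝ}

def gluedWeight (e : ℕ → ℕ) (W : ℕ → ℝ → Mat d) : ℝ → Mat d :=
  glue (fun k => dyad (e k) 1) (fun k y => W k (dilate (e k) y)) 1

def gluedFun (e : ℕ → ℕ) (a : ℕ → ℝ) (f : ℕ → ℝ → Fin d → ℝ) : ℝ → Fin d → ℝ :=
  glue (fun k => dyad (e k) 1) (fun k y => a k • f k (dilate (e k) y)) 0

lemma pairwise_disjoint_dyad_one (he : Injective e) :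
    Pairwise (Disjoint on fun k => dyad (e k) 1) :=
  fun _ _ h => disjoint_dyad_one (he.ne h)

lemma gluedWeight_eqOn (he : Injective e) (k : ℕ) :
    EqOn (gluedWeight e W) (W k ∘ dilate (e k)) (dyad (e k) 1) :=
  fun _ hy => glue_of_mem (pairwise_disjoint_dyad_one he) hy

lemma gluedFun_eqOn (he : Injective e) (k : ℕ) :
    EqOn (gluedFun e a f) (fun y => a k • f k (dilate (e k) y)) (dyad (e k) 1) :=
  fun _ hy => glue_of_mem (pairwise_disjoint_dyad_one he) hy

lemma pointwiseNormSq_glued_eqOn (he : Injective e) (k : ℕ) :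
    EqOn (pointwiseNormSq (gluedWeight e W) (gluedFun e a f))
      (fun y => a k ^ 2 * pointwiseNormSq (W k) (f k) (dilate (e k) y)) (dyad (e k) 1) := by
  intro y hy
  simp only [pointwiseNormSq, dotp, gluedWeight_eqOn he k hy, gluedFun_eqOn he k hy,
    comp_apply, Matrix.mulVec_smul, Pi.smul_apply, smul_eq_mul, Finset.mul_sum]
  exact Finset.sum_congr rfl fun _ _ => by ring

lemma pointwiseNormSq_glued_of_notMem {y : ℝ} (hy : y ∉ ⋃ k, dyad (e k) 1) :
    pointwiseNormSq (gluedWeight e W) (gluedFun e a f) y = 0 := by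
  simp [pointwiseNormSq, gluedFun, glue_of_notMem hy, dotp]

lemma isMatrixWeight_gluedWeight (hW : ∀ k, IsMatrixWeight d (W k)) (he : Injective e)
    (he1 : ∀ k, 1 ≤ e k) (hmass : ∀ i j, Summable fun k => (∫ x in I0, ‖W k x i j‖) / 2 ^ e k) :
    IsMatrixWeight d (gluedWeight e W) where
  intOn i j := by
    have hentry : ∀ k, EqOn (fun y => gluedWeight e W y i j)
        (fun y => 1 * W k (dilate (e k) y) i j) (dyad (e k) 1) := fun k y hy => by
      simp [gluedWeight_eqOn he k hy]
    have hnorm : ∀ k, EqOn (fun y => ‖gluedWeight e W y i j‖)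
        (fun y => 1 * ‖W k (dilate (e k) y) i j‖) (dyad (e k) 1) := fun k y hy => by
      simp [gluedWeight_eqOn he k hy]
    refine integrableOn_of_blocks measurableSet_I0 volume_I0_ne_top
      (fun _ => measurableSet_dyad _ 1) (fun k => dyad_one_subset_I0 (he1 k)) (c := (1 : Mat d) i j)
      (fun y hy => by rw [gluedWeight, glue_of_notMem hy.2])
      (fun k => integrableOn_dyad_one_of_eqOn (hentry k) ((hW k).intOn i j)) ?_
    simpa only [setIntegral_dyad_one_of_eqOn (g := fun x => ‖W _ x i j‖) (hnorm _), one_mul]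
      using hmass i j
  symm _ := glue_mem (S := {M : Mat d | M.IsSymm}) (fun k _ => (hW k).symm _) Matrix.isSymm_one
  posdef := by
    refine ae_restrict_of_blocks measurableSet_I0 (fun _ => measurableSet_dyad _ 1)
      (fun y hy => by rw [gluedWeight, glue_of_notMem hy.2]; exact Matrix.PosDef.one) fun k => ?_
    have hk := ae_restrict_preimage_dilate (e := e k) measurableSet_I0 (hW k).posdef
    rw [preimage_dilate_I0] at hk
    filter_upwards [hk, ae_restrict_mem (measurableSet_dyad _ 1)] with y hy hyJ
    rwa [gluedWeight_eqOn he k hyJ]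

lemma integrableOn_pointwiseNormSq_glued (hW : ∀ k, IsMatrixWeight d (W k))
    (hf : ∀ k, MemL2W (W k) (f k)) (he : Injective e) (he1 : ∀ k, 1 ≤ e k)
    (hsum : Summable fun k => a k ^ 2 * l2normSq (W k) (f k) / 2 ^ e k) :
    IntegrableOn (pointwiseNormSq (gluedWeight e W) (gluedFun e a f)) I0 := by
  have hnorm : ∀ k, EqOn (fun y => ‖pointwiseNormSq (gluedWeight e W) (gluedFun e a f) y‖)
      (fun y => a k ^ 2 * ‖pointwiseNormSq (W k) (f k) (dilate (e k) y)‖) (dyad (e k) 1) :=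
    fun k y hy => by
      simp only [pointwiseNormSq_glued_eqOn he k hy, norm_mul, Real.norm_of_nonneg (sq_nonneg _)]
  refine integrableOn_of_blocks measurableSet_I0 volume_I0_ne_top
    (fun _ => measurableSet_dyad _ 1) (fun k => dyad_one_subset_I0 (he1 k)) (c := 0)
    (fun y hy => pointwiseNormSq_glued_of_notMem hy.2)
    (fun k => integrableOn_dyad_one_of_eqOn (pointwiseNormSq_glued_eqOn he k) (hf k).2) ?_
  simpa only [setIntegral_dyad_one_of_eqOn (g := fun x => ‖pointwiseNormSq (W _) (f _) x‖)
    (hnorm _), integral_norm_pointwiseNormSq (hW _)] using hsum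

lemma memL2W_gluedFun (hW : ∀ k, IsMatrixWeight d (W k)) (hf : ∀ k, MemL2W (W k) (f k))
    (he : Injective e) (he1 : ∀ k, 1 ≤ e k)
    (hsum : Summable fun k => a k ^ 2 * l2normSq (W k) (f k) / 2 ^ e k) :
    MemL2W (gluedWeight e W) (gluedFun e a f) :=
  ⟨measurable_glue (fun _ => measurableSet_dyad _ 1)
    fun k => ((hf k).1.comp (measurable_dilate (e k))).const_smul (a k),
    integrableOn_pointwiseNormSq_glued hW hf he he1 hsum⟩

lemma l2normSq_glued (hW : ∀ k, IsMatrixWeight d (W k)) (hf : ∀ k, MemL2W (W k) (f k))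
    (he : Injective e) (he1 : ∀ k, 1 ≤ e k)
    (hsum : Summable fun k => a k ^ 2 * l2normSq (W k) (f k) / 2 ^ e k) :
    l2normSq (gluedWeight e W) (gluedFun e a f) =
      ∑' k, a k ^ 2 * l2normSq (W k) (f k) / 2 ^ e k := by
  change ∫ x in I0, pointwiseNormSq (gluedWeight e W) (gluedFun e a f) x = _
  rw [setIntegral_eq_tsum_of_blocks measurableSet_I0 (fun _ => measurableSet_dyad _ 1)
    (pairwise_disjoint_dyad_one he) (fun k => dyad_one_subset_I0 (he1 k))
    (fun y hy => pointwiseNormSq_glued_of_notMem hy.2)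
    (integrableOn_pointwiseNormSq_glued hW hf he he1 hsum)]
  exact tsum_congr fun k => setIntegral_dyad_one_of_eqOn (pointwiseNormSq_glued_eqOn he k)

lemma ofReal_mul_lintegral_McW_le_glued (he : Injective e) {k : ℕ} (he1 : 1 ≤ e k)
    (ha : 0 ≤ a k) :
    ENNReal.ofReal (a k ^ 2 / 2 ^ e k) * ∫⁻ x in I0, McW (W k) (f k) x ^ 2 ≤
      ∫⁻ x in I0, McW (gluedWeight e W) (gluedFun e a f) x ^ 2 :=
  calc ENNReal.ofReal (a k ^ 2 / 2 ^ e k) * ∫⁻ x in I0, McW (W k) (f k) x ^ 2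
      = ∫⁻ y in dyad (e k) 1, (ENNReal.ofReal (a k) * McW (W k) (f k) (dilate (e k) y)) ^ 2 := by
        simp_rw [mul_pow]
        rw [lintegral_const_mul' _ _ (by finiteness), ← preimage_dilate_I0,
          setLIntegral_preimage_dilate measurableSet_I0 fun x => McW (W k) (f k) x ^ 2,
          ← mul_assoc, ← ENNReal.ofReal_pow ha, ← ENNReal.ofReal_mul (by positivity),
          div_eq_mul_inv]
    _ ≤ ∫⁻ y in dyad (e k) 1, McW (gluedWeight e W) (gluedFun e a f) y ^ 2 :=
        setLIntegral_mono' (measurableSet_dyad _ 1) fun y hy => pow_le_pow_left₀ zero_le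
          (ofReal_mul_McW_dilate_le he1 ha (gluedWeight_eqOn he k) (gluedFun_eqOn he k) hy) 2
    _ ≤ ∫⁻ x in I0, McW (gluedWeight e W) (gluedFun e a f) x ^ 2 :=
        lintegral_mono_set (dyad_one_subset_I0 he1)

lemma lintegral_McW_glued_eq_top (he : Injective e) (he1 : ∀ k, 1 ≤ e k) (ha : ∀ k, 0 ≤ a k)
    (hgrowth : ∀ k, (2 : ℝ≥0∞) ^ k ≤
      ENNReal.ofReal (a k ^ 2 / 2 ^ e k) * ∫⁻ x in I0, McW (W k) (f k) x ^ 2) :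
    ∫⁻ x in I0, McW (gluedWeight e W) (gluedFun e a f) x ^ 2 = ⊤ :=
  top_le_iff.1 <| le_of_tendsto' (ENNReal.tendsto_pow_atTop_nhds_top_iff.2 ENNReal.one_lt_two)
    fun k => (hgrowth k).trans (ofReal_mul_lintegral_McW_le_glued he (he1 k) (ha k))

end Gluing

lemma exists_strictMono_div_two_pow_le (m : ℕ → ℝ) :
    ∃ e : ℕ → ℕ, StrictMono e ∧ (∀ k, 1 ≤ e k) ∧ ∀ k, m k / 2 ^ e k ≤ (1 / 2) ^ k := by
  choose n hn using fun k => pow_unbounded_of_one_lt (m k) one_lt_two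
  refine ⟨fun k => k + 1 + ∑ i ∈ Finset.range (k + 1), n i,
    strictMono_nat_of_lt_succ fun k => ?_, fun k => le_add_right (Nat.le_add_left 1 k), fun k => ?_⟩
  · rw [Finset.sum_range_succ _ (k + 1)]; omega
  have hS : n k ≤ ∑ i ∈ Finset.range (k + 1), n i :=
    Finset.single_le_sum (fun _ _ => Nat.zero_le _) (Finset.self_mem_range_succ k)
  have hscale : (1 / 2 : ℝ) ^ k * 2 ^ (k + 1 + ∑ i ∈ Finset.range (k + 1), n i) =
      2 * 2 ^ ∑ i ∈ Finset.range (k + 1), n i := by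
    rw [pow_add, pow_add, one_div_pow]; field_simp
  rw [div_le_iff₀ (by positivity), hscale]
  calc m k ≤ 2 ^ n k := (hn k).le
    _ ≤ 2 ^ ∑ i ∈ Finset.range (k + 1), n i := pow_le_pow_right₀ one_le_two hS
    _ ≤ 2 * 2 ^ ∑ i ∈ Finset.range (k + 1), n i := by
      linarith [pow_pos (two_pos : (0 : ℝ) < 2) (∑ i ∈ Finset.range (k + 1), n i)]

lemma exists_strictMono_summable_div_two_pow {ι : Type*} [Fintype ι] (m : ι → ℕ → ℝ)
    (hm : ∀ i k, 0 ≤ m i k) :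
    ∃ e : ℕ → ℕ, StrictMono e ∧ (∀ k, 1 ≤ e k) ∧ ∀ i, Summable fun k => m i k / 2 ^ e k := by
  obtain ⟨e, he, he1, hbound⟩ := exists_strictMono_div_two_pow_le fun k => ∑ i, m i k
  refine ⟨e, he, he1, fun i => summable_geometric_two.of_nonneg_of_le
    (fun k => div_nonneg (hm i k) (by positivity)) fun k => le_trans ?_ (hbound k)⟩
  gcongr
  exact Finset.single_le_sum (fun j _ => hm j k) (Finset.mem_univ i)

/-- **Gluing lemma: failure of uniform bounds yields a single unbounded weight.**
If for every `k ≥ 1` there are a matrix weight `W_k` on `I₀` and a nonzero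
`f_k ∈ L²_{W_k}(ℝ^d)` supported on `I₀` with `‖M^c_{W_k} f_k‖²_{L²} > 4^k ‖f_k‖²_{L²_{W_k}}`,
then there are a matrix weight `W̃` on `I₀` and `f̃ ∈ L²_{W̃}(ℝ^d)` with `‖f̃‖_{L²_{W̃}} = 1`
and `‖M^c_{W̃} f̃‖_{L²} = ∞`. -/
theorem gluing_unbounded_weight {d : ℕ}
    (h : ∀ k : ℕ, 1 ≤ k →
      ∃ (W : ℝ → Mat d) (f : ℝ → Fin d → ℝ),
        IsMatrixWeight d W ∧ MemL2W W f ∧ (∀ x, x ∉ I0 → f x = 0) ∧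
        0 < l2normSq W f ∧
        ENNReal.ofReal ((4 : ℝ) ^ k * l2normSq W f) < ∫⁻ x in I0, (McW W f x) ^ 2) :
    ∃ (Wt : ℝ → Mat d) (ft : ℝ → Fin d → ℝ),
      IsMatrixWeight d Wt ∧ MemL2W Wt ft ∧ l2normSq Wt ft = 1 ∧
      (∫⁻ x in I0, (McW Wt ft x) ^ 2) = ⊤ := by
  choose W f hW hf _ hpos hbig using fun k => h (k + 1) (Nat.le_add_left 1 k)
  obtain ⟨e, he, he1, hmass⟩ := exists_strictMono_summable_div_two_pow
    (fun (ij : Fin d × Fin d) k => ∫ x in I0, ‖W k x ij.1 ij.2‖)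
    fun _ _ => integral_nonneg fun _ => norm_nonneg _
  set a : ℕ → ℝ := fun k => √(2 ^ e k / (2 ^ (k + 1) * l2normSq (W k) (f k)))
  have hcoef : ∀ k, a k ^ 2 / 2 ^ e k = (2 ^ (k + 1) * l2normSq (W k) (f k))⁻¹ := fun k => by
    have := hpos k
    rw [Real.sq_sqrt (by positivity)]; field_simp
  have hblock : ∀ k, a k ^ 2 * l2normSq (W k) (f k) / 2 ^ e k = 1 / 2 / 2 ^ k := fun k => by
    have := hpos k
    rw [mul_div_right_comm, hcoef, pow_succ]; field_simp
  have hsum : Summable fun k => a k ^ 2 * l2normSq (W k) (f k) / 2 ^ e k := by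
    simpa only [hblock] using summable_geometric_two' 1
  have hgrowth : ∀ k, (2 : ℝ≥0∞) ^ k ≤
      ENNReal.ofReal (a k ^ 2 / 2 ^ e k) * ∫⁻ x in I0, McW (W k) (f k) x ^ 2 := fun k =>
    calc (2 : ℝ≥0∞) ^ k ≤ ENNReal.ofReal (2 ^ (k + 1)) := by
          rw [ENNReal.ofReal_pow zero_le_two, ENNReal.ofReal_ofNat]
          exact pow_le_pow_right₀ one_le_two k.le_succ
      _ = ENNReal.ofReal (a k ^ 2 / 2 ^ e k * (4 ^ (k + 1) * l2normSq (W k) (f k))) := by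
          have := hpos k
          rw [hcoef, show (4 : ℝ) = 2 * 2 by norm_num, mul_pow]; field_simp
      _ ≤ _ := by rw [ENNReal.ofReal_mul (by positivity)]; gcongr; exact (hbig k).le
  refine ⟨gluedWeight e W, gluedFun e a f,
    isMatrixWeight_gluedWeight hW he.injective he1 fun i j => hmass (i, j),
    memL2W_gluedFun hW hf he.injective he1 hsum, ?_,
    lintegral_McW_glued_eq_top he.injective he1 (fun k => Real.sqrt_nonneg _) hgrowth⟩
  rw [l2normSq_glued hW hf he.injective he1 hsum]
  simpa only [hblock] using tsum_geometric_two' 1
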